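/- arXiv:0803.0270 — 2 statements merged into one kernel-verified Lean document; each statement's English description precedes it below -/
import Mathlib

section
/- If a positive natural number N is autobiographical with base-10 digits d_0 d_1 … d_{k-1} (most-significant-first), then among the digits d_1, …, d_{k-1} exactly one equals 2, and every other one of these digits is 0 or 1. -/
/-- The base-10 digits of `N`, written most-significant-first. -/
def msdDigits (N : ℕ) : List ℕ := (Nat.digits 10 N).reverse

/-- A positive natural number `N` is autobiographical if, writing its base-10 digits
most-significant-first as `d_0 d_1 … d_{k-1}`, for every `i < k` the digit `d_i` equals
the number of occurrences of the digit `i` in the base-10 representation of `N`. -/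
def Autobiographical (N : ℕ) : Prop :=
  ∀ i < (msdDigits N).length, (msdDigits N).getD i 0 = (msdDigits N).count i

/-!
Write the digits as `a :: T` with leading digit `a ≠ 0`. Then `0` and `a` are two distinct
digits, so no digit can occur `k` times and all digits are below the length `k`; hence the
digit sum is `∑ i < k, count i = k`. Since `a = count 0` is the number of zeros in `T`, this
gives `∑ d ∈ T, max d 1 = T.sum + T.count 0 = T.length + 1`. Each summand `max d 1` is at
least `1`, so the single unit of excess comes from exactly one tail digit `2`, all others
being `0` or `1`.
-/

def SelfDescribing (L : List ℕ) : Prop :=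
  ∀ i < L.length, L.getD i 0 = L.count i

namespace List

lemma length_le_sum_add_count_zero (T : List ℕ) : T.length ≤ T.sum + T.count 0 := by
  induction T with
  | nil => simp
  | cons a T ih =>
    simp only [sum_cons, length_cons, count_cons, beq_iff_eq]
    split <;> omega

lemma le_one_of_sum_add_count_zero_eq_length {T : List ℕ}
    (h : T.sum + T.count 0 = T.length) : ∀ d ∈ T, d ≤ 1 := by
  induction T with
  | nil => simp
  | cons a T ih =>
    have := length_le_sum_add_count_zero T
    simp only [sum_cons, length_cons, count_cons, beq_iff_eq, forall_mem_cons] at h ⊢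
    exact ⟨by split at h <;> omega, ih (by split at h <;> omega)⟩

lemma count_two_eq_one_of_sum_add_count_zero_eq_length_add_one {T : List ℕ}
    (h : T.sum + T.count 0 = T.length + 1) : T.count 2 = 1 ∧ ∀ d ∈ T, d ≠ 2 → d ≤ 1 := by
  induction T with
  | nil => simp at h
  | cons a T ih =>
    have := length_le_sum_add_count_zero T
    simp only [sum_cons, length_cons, count_cons, beq_iff_eq, forall_mem_cons] at h ⊢
    by_cases ha : a = 2
    · subst ha
      have hT := le_one_of_sum_add_count_zero_eq_length (T := T) (by simp at h; omega)
      have hT2 : T.count 2 = 0 := count_eq_zero.mpr fun h2 => by simpa using hT 2 h2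
      exact ⟨by simp [hT2], by simp, fun d hd _ => hT d hd⟩
    · obtain ⟨h2, h01⟩ := ih (by split at h <;> omega)
      exact ⟨by simp [ha, h2], fun _ => by split at h <;> omega, h01⟩

end List

namespace SelfDescribing

lemma lt_length {a : ℕ} {T : List ℕ} (hL : SelfDescribing (a :: T)) (ha : a ≠ 0) :
    ∀ x ∈ a :: T, x < (a :: T).length := by
  intro x hx
  obtain ⟨j, hj, rfl⟩ := List.getElem_of_mem hx
  rw [← List.getD_eq_getElem _ 0 hj, hL j hj, List.count_lt_length_iff]
  have h0 : 0 ∈ a :: T := List.count_pos_iff.mp <| by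
    rw [← hL 0 (by simp)]
    exact Nat.pos_of_ne_zero ha
  by_cases hja : j = a
  · exact ⟨0, h0, by omega⟩
  · exact ⟨a, List.mem_cons_self, Ne.symm hja⟩

lemma sum_eq_length {L : List ℕ} (hL : SelfDescribing L) (hlt : ∀ x ∈ L, x < L.length) :
    L.sum = L.length := by
  calc L.sum = ∑ i ∈ Finset.range L.length, L.getD i 0 := by
        rw [← Fin.sum_univ_getElem, ← Fin.sum_univ_eq_sum_range]
        exact Finset.sum_congr rfl fun i _ => (List.getD_eq_getElem _ _ i.2).symm
    _ = ∑ i ∈ Finset.range L.length, L.count i :=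
        Finset.sum_congr rfl fun i hi => hL i (Finset.mem_range.mp hi)
    _ = L.length := by
        simpa using Multiset.sum_count_eq_card (m := (L : Multiset ℕ))
          fun x hx => Finset.mem_range.mpr (hlt x hx)

lemma tail_count_two_eq_one {a : ℕ} {T : List ℕ} (hL : SelfDescribing (a :: T)) (ha : a ≠ 0) :
    T.count 2 = 1 ∧ ∀ d ∈ T, d ≠ 2 → d ≤ 1 := by
  have hsum := hL.sum_eq_length (hL.lt_length ha)
  have h0 : a = (a :: T).count 0 := hL 0 (by simp)
  simp only [List.sum_cons, List.length_cons, List.count_cons, beq_iff_eq, if_neg ha] at hsum h0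
  exact List.count_two_eq_one_of_sum_add_count_zero_eq_length_add_one (by omega)

end SelfDescribing

lemma exists_msdDigits_eq_cons {N : ℕ} (hN : N ≠ 0) :
    ∃ a T, msdDigits N = a :: T ∧ a ≠ 0 := by
  have hne : msdDigits N ≠ [] := by simpa [msdDigits] using Nat.digits_ne_nil_iff_ne_zero.mpr hN
  refine ⟨(msdDigits N).head hne, (msdDigits N).tail, (List.cons_head_tail hne).symm, ?_⟩
  simpa [msdDigits, List.head_reverse] using Nat.getLast_digit_ne_zero 10 hN

theorem autobiographical_tail_digits (N : ℕ) (hN : 0 < N)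
    (hA : Autobiographical N) :
    (msdDigits N).tail.count 2 = 1 ∧
      ∀ d ∈ (msdDigits N).tail, d ≠ 2 → d = 0 ∨ d = 1 := by
  obtain ⟨a, T, hL, ha⟩ := exists_msdDigits_eq_cons hN.ne'
  have hA' : SelfDescribing (a :: T) := hL ▸ hA
  obtain ⟨h2, h01⟩ := hA'.tail_count_two_eq_one ha
  rw [hL, List.tail_cons]
  exact ⟨h2, fun d hd hd2 => by have := h01 d hd hd2; omega⟩
end

section
/- Let L be a digit string admitting an infinite sequence of CVs. Then for every n ≥ 1 the digit string CV_n(L) has at most 10 entries, and for every n ≥ 2 the sum of the entries of CV_n(L) is at most 10. -/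
/-- A digit string is a nonempty finite list of natural numbers, each at most 9,
read most-significant-first. -/
def DigitString (L : List ℕ) : Prop := L ≠ [] ∧ ∀ d ∈ L, d ≤ 9

/-- The curriculum vitae of `L`: the digit string of length `m + 1`, where `m` is the
largest entry of `L`, whose `i`-th entry (0-indexed) counts the occurrences of `i` in `L`. -/
def CV (L : List ℕ) : List ℕ :=
  (List.range (L.foldr max 0 + 1)).map (fun i => L.count i)

/-- The sequence of CVs of `L`: `CVseq L 0 = L` and `CVseq L (n+1) = CV (CVseq L n)`. -/
def CVseq (L : List ℕ) : ℕ → List ℕ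
  | 0 => L
  | n + 1 => CV (CVseq L n)

/-- `L` admits an infinite sequence of CVs: for every `n`, each value occurs at most
9 times in `CVseq L n` (so the next CV is defined). -/
def AdmitsCVs (L : List ℕ) : Prop := ∀ n, ∀ d, (CVseq L n).count d ≤ 9

/-- The complete life story of `L`: the digit string of length 10 whose `i`-th entry
(0-indexed, `0 ≤ i ≤ 9`) counts the occurrences of `i` in `L`. -/
def CLS (L : List ℕ) : List ℕ := (List.range 10).map (fun i => L.count i)

/-- The sequence of life stories of `L`. -/
def CLSseq (L : List ℕ) : ℕ → List ℕ
  | 0 => L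
  | n + 1 => CLS (CLSseq L n)

/-- `L` admits an infinite sequence of life stories: for every `n`, each value occurs
at most 9 times in `CLSseq L n`. -/
def AdmitsCLSs (L : List ℕ) : Prop := ∀ n, ∀ d, (CLSseq L n).count d ≤ 9

/-- The height of a digit string: the maximum of (its largest entry plus 1) and its length. -/
def height (L : List ℕ) : ℕ := max (L.foldr max 0 + 1) L.length

/-!
Every entry of `CV M` counts occurrences in `M`, so `CV M` has length `max M + 1` and entry sum
`M.length`. Admissibility keeps all entries of every `CV_n(L)` at most 9, which bounds the lengths
from `n = 1` on, and the sums, being earlier lengths, from `n = 2` on.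
-/

lemma List.sum_map_count_range {N : ℕ} {M : List ℕ} (h : ∀ a ∈ M, a < N) :
    ((List.range N).map M.count).sum = M.length := by
  rw [← List.sum_toFinset _ List.nodup_range, List.toFinset_range]
  simpa using Multiset.sum_count_eq_card (s := Finset.range N) (m := (M : Multiset ℕ))
    (by simpa using h)

lemma length_CV (M : List ℕ) : (CV M).length = M.foldr max 0 + 1 := by
  simp [CV]

lemma sum_CV (M : List ℕ) : (CV M).sum = M.length :=
  List.sum_map_count_range fun _ ha => Nat.lt_succ_of_le (List.le_max_of_le' 0 ha le_rfl)

lemma length_CV_le_ten {M : List ℕ} (hM : ∀ d ∈ M, d ≤ 9) : (CV M).length ≤ 10 := by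
  have : M.foldr max 0 ≤ 9 := List.max_le_of_forall_le M 9 hM
  rw [length_CV]
  omega

lemma forall_mem_CVseq_le_nine {L : List ℕ} (hL : ∀ d ∈ L, d ≤ 9) (h : AdmitsCVs L) :
    ∀ n, ∀ d ∈ CVseq L n, d ≤ 9
  | 0 => hL
  | n + 1 => fun _ hd => by
    obtain ⟨i, -, rfl⟩ := List.mem_map.1 hd
    exact h n i

theorem cvseq_length_and_sum (L : List ℕ) (hL : DigitString L) (h : AdmitsCVs L) :
    (∀ n, 1 ≤ n → (CVseq L n).length ≤ 10) ∧
      (∀ n, 2 ≤ n → (CVseq L n).sum ≤ 10) := by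
  have hlen : ∀ n, 1 ≤ n → (CVseq L n).length ≤ 10 := by
    intro n hn
    obtain ⟨k, rfl⟩ := Nat.exists_eq_add_of_le' hn
    exact length_CV_le_ten (forall_mem_CVseq_le_nine hL.2 h k)
  refine ⟨hlen, fun n hn => ?_⟩
  obtain ⟨k, rfl⟩ := Nat.exists_eq_add_of_le' hn
  rw [CVseq, sum_CV]
  exact hlen (k + 1) (by omega)
end
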